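/- Let p be a prime and let α, β, γ, δ be positive integers with 0 ≤ γ − δ ≤ min{α, β}, and let G = G(α,β,γ,δ). Then the element c is central in G and has order exactly p^γ, the quotient G/⟨c⟩ is isomorphic to ℤ/p^α × ℤ/p^β (generated by the images of a and b), and G has order p^{α+β+γ}. -/

import Mathlib

open scoped commutatorElement

/-- The relators for the presentation
`⟨a, b, c ∣ [a,c] = [b,c] = 1 = a^{p^α} = b^{p^β} = c^{p^γ}, [a,b] = c^{p^δ}⟩`,
where `a`, `b`, `c` are the generators indexed by `0`, `1`, `2 : Fin 3`. -/
def pgRels (p α β γ δ : ℕ) : Set (FreeGroup (Fin 3)) :=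
  {⁅FreeGroup.of (0 : Fin 3), FreeGroup.of (2 : Fin 3)⁆, ⁅FreeGroup.of (1 : Fin 3), FreeGroup.of (2 : Fin 3)⁆,
    FreeGroup.of (0 : Fin 3) ^ p ^ α, FreeGroup.of (1 : Fin 3) ^ p ^ β, FreeGroup.of (2 : Fin 3) ^ p ^ γ,
    ⁅FreeGroup.of (0 : Fin 3), FreeGroup.of (1 : Fin 3)⁆ * (FreeGroup.of (2 : Fin 3) ^ p ^ δ)⁻¹}

/-- The group `G(α,β,γ,δ)` with presentation
`⟨a, b, c ∣ [a,c] = [b,c] = 1 = a^{p^α} = b^{p^β} = c^{p^γ}, [a,b] = c^{p^δ}⟩`. -/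
abbrev GG (p α β γ δ : ℕ) : Type := PresentedGroup (pgRels p α β γ δ)

/-- The generator `a` of `G(α,β,γ,δ)`. -/
def ga (p α β γ δ : ℕ) : GG p α β γ δ := PresentedGroup.of (0 : Fin 3)
/-- The generator `b` of `G(α,β,γ,δ)`. -/
def gb (p α β γ δ : ℕ) : GG p α β γ δ := PresentedGroup.of (1 : Fin 3)
/-- The generator `c` of `G(α,β,γ,δ)`. -/
def gc (p α β γ δ : ℕ) : GG p α β γ δ := PresentedGroup.of (2 : Fin 3)

/-! Since `c` is central and `[a, b] = c ^ p ^ δ`, every element of `G(α,β,γ,δ)` can be written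
as `c ^ k * b ^ j * a ^ i`, so `|G| ≤ p ^ (α + β + γ)`. On the other hand `G` maps onto
`ℤ/p^α × ℤ/p^β` with `c` in the kernel, and `G` maps to the Heisenberg group of the pairing
`ℤ/p^α × ℤ/p^β → ℤ/p^γ`, `(x, y) ↦ p ^ δ * x * y`, which is well defined because
`γ - δ ≤ min α β`; there the image of `c` has order `p ^ γ`. So the kernel, which contains `⟨c⟩`,
has order at least `p ^ γ`, and counting forces all these inequalities to be equalities. -/

@[ext]
structure HeisenbergGroup {A B C : Type*} [AddCommGroup A] [AddCommGroup B] [AddCommGroup C]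
    (f : A →+ B →+ C) where
  x : A
  y : B
  z : C

namespace HeisenbergGroup

variable {A B C : Type*} [AddCommGroup A] [AddCommGroup B] [AddCommGroup C] {f : A →+ B →+ C}

instance : Mul (HeisenbergGroup f) := ⟨fun g h => ⟨g.x + h.x, g.y + h.y, g.z + h.z + f g.x h.y⟩⟩
instance : One (HeisenbergGroup f) := ⟨⟨0, 0, 0⟩⟩
instance : Inv (HeisenbergGroup f) := ⟨fun g => ⟨-g.x, -g.y, -g.z + f g.x g.y⟩⟩

@[simp] theorem mul_x (g h : HeisenbergGroup f) : (g * h).x = g.x + h.x := rfl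
@[simp] theorem mul_y (g h : HeisenbergGroup f) : (g * h).y = g.y + h.y := rfl
@[simp] theorem mul_z (g h : HeisenbergGroup f) : (g * h).z = g.z + h.z + f g.x h.y := rfl
@[simp] theorem one_x : (1 : HeisenbergGroup f).x = 0 := rfl
@[simp] theorem one_y : (1 : HeisenbergGroup f).y = 0 := rfl
@[simp] theorem one_z : (1 : HeisenbergGroup f).z = 0 := rfl
@[simp] theorem inv_x (g : HeisenbergGroup f) : g⁻¹.x = -g.x := rfl
@[simp] theorem inv_y (g : HeisenbergGroup f) : g⁻¹.y = -g.y := rfl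
@[simp] theorem inv_z (g : HeisenbergGroup f) : g⁻¹.z = -g.z + f g.x g.y := rfl

instance : Group (HeisenbergGroup f) where
  mul_assoc g h k := by ext <;> simp <;> abel
  one_mul g := by ext <;> simp
  mul_one g := by ext <;> simp
  inv_mul_cancel g := by ext <;> simp

variable (f) in
def ofX : Multiplicative A →* HeisenbergGroup f where
  toFun a := ⟨a.toAdd, 0, 0⟩
  map_one' := rfl
  map_mul' _ _ := by ext <;> simp

variable (f) in
def ofY : Multiplicative B →* HeisenbergGroup f where
  toFun b := ⟨0, b.toAdd, 0⟩
  map_one' := rfl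
  map_mul' _ _ := by ext <;> simp

variable (f) in
def ofZ : Multiplicative C →* HeisenbergGroup f where
  toFun c := ⟨0, 0, c.toAdd⟩
  map_one' := rfl
  map_mul' _ _ := by ext <;> simp

theorem ofZ_injective : Function.Injective (ofZ f) := fun _ _ h => congrArg HeisenbergGroup.z h

theorem commute_ofZ (c : Multiplicative C) (g : HeisenbergGroup f) : Commute g (ofZ f c) := by
  ext <;> simp [ofZ, add_comm]

theorem commutatorElement_ofX_ofY (a : Multiplicative A) (b : Multiplicative B) :
    ⁅ofX f a, ofY f b⁆ = ofZ f (.ofAdd (f a.toAdd b.toAdd)) := by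
  ext <;> simp [ofX, ofY, ofZ, commutatorElement_def]

end HeisenbergGroup

def zmodHom {A : Type*} [AddCommGroup A] (n : ℕ) (a : A) (ha : n • a = 0) : ZMod n →+ A :=
  ZMod.lift n ⟨zmultiplesHom A a, by simpa using ha⟩

theorem zmodHom_intCast {A : Type*} [AddCommGroup A] {n : ℕ} {a : A} (ha : n • a = 0) (k : ℤ) :
    zmodHom n a ha k = k • a := by
  simp [zmodHom]

@[simp]
theorem zmodHom_one {A : Type*} [AddCommGroup A] {n : ℕ} {a : A} (ha : n • a = 0) :
    zmodHom n a ha 1 = a := by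
  simpa using zmodHom_intCast ha 1

def zmodPairing {C : Type*} [AddCommGroup C] (m n : ℕ) (c : C) (hm : m • c = 0)
    (hn : n • c = 0) : ZMod m →+ ZMod n →+ C :=
  zmodHom m (zmodHom n c hn) <| by
    ext y
    obtain ⟨k, rfl⟩ := ZMod.intCast_surjective y
    simp [zmodHom_intCast, smul_comm m k c, hm]

@[simp]
theorem zmodPairing_one_one {C : Type*} [AddCommGroup C] {m n : ℕ} {c : C} (hm : m • c = 0)
    (hn : n • c = 0) : zmodPairing m n c hm hn 1 1 = c := by
  simp [zmodPairing]

theorem ZMod.ofAdd_one_pow_self (n : ℕ) : Multiplicative.ofAdd (1 : ZMod n) ^ n = 1 := by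
  rw [← ofAdd_nsmul, nsmul_one, ZMod.natCast_self, ofAdd_zero]

theorem ZMod.pow_nsmul_natCast_pow_eq_zero {p a b c : ℕ} (h : c ≤ a + b) :
    p ^ a • ((p ^ b : ℕ) : ZMod (p ^ c)) = 0 := by
  rw [nsmul_eq_mul, ← Nat.cast_mul, ← pow_add, ZMod.natCast_eq_zero_iff]
  exact pow_dvd_pow p h

theorem zpow_mul_zpow_eq_of_commutatorElement_eq {G : Type*} [Group G] {x y z : G}
    (hxz : Commute x z) (hyz : Commute y z) (h : ⁅x, y⁆ = z) (m n : ℤ) :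
    x ^ m * y ^ n = z ^ (m * n) * y ^ n * x ^ m := by
  have hxy : SemiconjBy x y (z * y) := by
    rw [SemiconjBy, ← h, commutatorElement_def]; group
  have hyx : SemiconjBy (y ^ n) x (z ^ (-n) * x) := by
    have h' : x * y ^ n = z ^ n * y ^ n * x := by
      rw [(hxy.zpow_right n).eq, hyz.symm.mul_zpow]
    calc y ^ n * x = z ^ (-n) * (z ^ n * y ^ n * x) := by group
      _ = z ^ (-n) * x * y ^ n := by rw [← h', mul_assoc]
  calc x ^ m * y ^ n = z ^ (m * n) * (z ^ (-n) * x) ^ m * y ^ n := by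
        rw [(hxz.symm.zpow_left (-n)).mul_zpow, ← zpow_mul]; group
    _ = z ^ (m * n) * y ^ n * x ^ m := by rw [mul_assoc, ← (hyx.zpow_right m).eq, mul_assoc]

theorem finite_and_card_le_of_forall_eq_zpow_mul_zpow_mul_zpow {G : Type*} [Group G] {x y w : G}
    {l m n : ℕ} (hl : 0 < l) (hm : 0 < m) (hn : 0 < n) (hx : x ^ l = 1) (hy : y ^ m = 1)
    (hw : w ^ n = 1) (h : ∀ g : G, ∃ i j k : ℤ, g = x ^ i * y ^ j * w ^ k) :
    Finite G ∧ Nat.card G ≤ l * m * n := by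
  have hzpowers : ∀ {v : G} {r : ℕ}, 0 < r → v ^ r = 1 →
      Finite (Subgroup.zpowers v) ∧ Nat.card (Subgroup.zpowers v) ≤ r := fun hr hv =>
    ⟨(isOfFinOrder_iff_pow_eq_one.mpr ⟨_, hr, hv⟩).finite_zpowers.to_subtype,
      (Nat.card_zpowers (α := G) _).trans_le (orderOf_le_of_pow_eq_one hr hv)⟩
  obtain ⟨_, hxl⟩ := hzpowers hl hx
  obtain ⟨_, hym⟩ := hzpowers hm hy
  obtain ⟨_, hwn⟩ := hzpowers hn hw
  let μ : Subgroup.zpowers x × Subgroup.zpowers y × Subgroup.zpowers w → G :=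
    fun t => t.1 * t.2.1 * t.2.2
  have hμ : Function.Surjective μ := fun g => by
    obtain ⟨i, j, k, rfl⟩ := h g
    exact ⟨(⟨_, Subgroup.zpow_mem_zpowers x i⟩, ⟨_, Subgroup.zpow_mem_zpowers y j⟩,
      ⟨_, Subgroup.zpow_mem_zpowers w k⟩), rfl⟩
  refine ⟨Finite.of_surjective μ hμ, (Nat.card_le_card_of_surjective μ hμ).trans ?_⟩
  rw [Nat.card_prod, Nat.card_prod, ← mul_assoc]
  gcongr

theorem MonoidHom.card_eq_card_mul_card_ker {G Q : Type*} [Group G] [Group Q] {φ : G →* Q}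
    (hφ : Function.Surjective φ) : Nat.card G = Nat.card Q * Nat.card φ.ker := by
  rw [← φ.ker.card_mul_index, Subgroup.index_ker, φ.range_eq_top.mpr hφ, Subgroup.card_top,
    mul_comm]

theorem MonoidHom.ker_eq_of_le_of_card_le {G Q : Type*} [Group G] [Group Q] [Finite G]
    {φ : G →* Q} (hφ : Function.Surjective φ) {K : Subgroup G} (hK : K ≤ φ.ker)
    (hcard : Nat.card G ≤ Nat.card Q * Nat.card K) : φ.ker = K := by
  have : Finite Q := Finite.of_surjective φ hφ
  rw [MonoidHom.card_eq_card_mul_card_ker hφ] at hcard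
  exact (Subgroup.eq_of_le_of_card_ge hK (Nat.le_of_mul_le_mul_left hcard Nat.card_pos)).symm

namespace GG

variable {p α β γ δ : ℕ}

local notation "𝐚" => ga p α β γ δ
local notation "𝐛" => gb p α β γ δ
local notation "𝐜" => gc p α β γ δ

theorem ga_commute_gc : Commute 𝐚 𝐜 := by
  have h := PresentedGroup.one_of_mem (rels := pgRels p α β γ δ)
    (x := ⁅FreeGroup.of (0 : Fin 3), FreeGroup.of (2 : Fin 3)⁆) (by simp [pgRels])
  rw [map_commutatorElement] at h
  exact commutatorElement_eq_one_iff_commute.mp h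

theorem gb_commute_gc : Commute 𝐛 𝐜 := by
  have h := PresentedGroup.one_of_mem (rels := pgRels p α β γ δ)
    (x := ⁅FreeGroup.of (1 : Fin 3), FreeGroup.of (2 : Fin 3)⁆) (by simp [pgRels])
  rw [map_commutatorElement] at h
  exact commutatorElement_eq_one_iff_commute.mp h

theorem ga_pow : 𝐚 ^ p ^ α = 1 := by
  have h := PresentedGroup.one_of_mem (rels := pgRels p α β γ δ)
    (x := FreeGroup.of 0 ^ p ^ α) (by simp [pgRels])
  rwa [map_pow] at h

theorem gb_pow : 𝐛 ^ p ^ β = 1 := by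
  have h := PresentedGroup.one_of_mem (rels := pgRels p α β γ δ)
    (x := FreeGroup.of 1 ^ p ^ β) (by simp [pgRels])
  rwa [map_pow] at h

theorem gc_pow : 𝐜 ^ p ^ γ = 1 := by
  have h := PresentedGroup.one_of_mem (rels := pgRels p α β γ δ)
    (x := FreeGroup.of 2 ^ p ^ γ) (by simp [pgRels])
  rwa [map_pow] at h

theorem commutatorElement_ga_gb : ⁅𝐚, 𝐛⁆ = 𝐜 ^ p ^ δ := by
  have h := PresentedGroup.one_of_mem (rels := pgRels p α β γ δ)
    (x := ⁅FreeGroup.of (0 : Fin 3), FreeGroup.of (1 : Fin 3)⁆ * (FreeGroup.of 2 ^ p ^ δ)⁻¹)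
    (by simp [pgRels])
  rw [map_mul, map_inv, map_pow, map_commutatorElement] at h
  exact mul_inv_eq_one.mp h

theorem gc_mem_center : 𝐜 ∈ Subgroup.center (GG p α β γ δ) := by
  refine Subgroup.mem_center_iff.mpr fun g => ?_
  refine Subgroup.mem_centralizer_singleton_iff.mp
    (PresentedGroup.generated_by _ _ (fun i => ?_) g)
  rw [Subgroup.mem_centralizer_singleton_iff]
  fin_cases i
  exacts [ga_commute_gc.eq, gb_commute_gc.eq, rfl]

section Lift

variable {H : Type*} [Group H] (x y z : H) (hxz : Commute x z) (hyz : Commute y z)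
  (hx : x ^ p ^ α = 1) (hy : y ^ p ^ β = 1) (hz : z ^ p ^ γ = 1) (hxy : ⁅x, y⁆ = z ^ p ^ δ)

def lift : GG p α β γ δ →* H :=
  PresentedGroup.toGroup (f := ![x, y, z]) <| by
    rintro r (rfl | rfl | rfl | rfl | rfl | rfl) <;>
      simp [map_commutatorElement, commutatorElement_eq_one_iff_commute, *]

theorem lift_ga : lift x y z hxz hyz hx hy hz hxy 𝐚 = x := PresentedGroup.toGroup.of _
theorem lift_gb : lift x y z hxz hyz hx hy hz hxy 𝐛 = y := PresentedGroup.toGroup.of _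
theorem lift_gc : lift x y z hxz hyz hx hy hz hxy 𝐜 = z := PresentedGroup.toGroup.of _

end Lift

theorem ga_zpow_mul_zpow_mul_zpow_mul_zpow (n k j i : ℤ) :
    𝐚 ^ n * (𝐜 ^ k * 𝐛 ^ j * 𝐚 ^ i) = 𝐜 ^ (k + p ^ δ * n * j) * 𝐛 ^ j * 𝐚 ^ (n + i) := by
  have hab : 𝐚 ^ n * 𝐛 ^ j = (𝐜 ^ p ^ δ) ^ (n * j) * 𝐛 ^ j * 𝐚 ^ n :=
    zpow_mul_zpow_eq_of_commutatorElement_eq (ga_commute_gc.pow_right _)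
      (gb_commute_gc.pow_right _) commutatorElement_ga_gb n j
  calc 𝐚 ^ n * (𝐜 ^ k * 𝐛 ^ j * 𝐚 ^ i) = 𝐜 ^ k * (𝐚 ^ n * 𝐛 ^ j) * 𝐚 ^ i := by
        rw [← mul_assoc, ← mul_assoc, (ga_commute_gc.zpow_zpow n k).eq, mul_assoc (𝐜 ^ k)]
    _ = _ := by
        rw [hab]; group; push_cast; ring_nf

theorem exists_eq_zpow_mul_zpow_mul_zpow (g : GG p α β γ δ) :
    ∃ k j i : ℤ, g = 𝐜 ^ k * 𝐛 ^ j * 𝐚 ^ i := by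
  have hmul : ∀ (t : Fin 3) (n k j i : ℤ), ∃ k' j' i' : ℤ,
      PresentedGroup.of t ^ n * (𝐜 ^ k * 𝐛 ^ j * 𝐚 ^ i) = 𝐜 ^ k' * 𝐛 ^ j' * 𝐚 ^ i' := by
    intro t n k j i
    fin_cases t
    · exact ⟨_, _, _, ga_zpow_mul_zpow_mul_zpow_mul_zpow n k j i⟩
    · refine ⟨k, n + j, i, ?_⟩
      change 𝐛 ^ n * _ = _
      rw [← mul_assoc, ← mul_assoc, (gb_commute_gc.zpow_zpow n k).eq, zpow_add]
      group
    · refine ⟨n + k, j, i, ?_⟩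
      change 𝐜 ^ n * _ = _
      rw [zpow_add]
      group
  have hg : g ∈ Subgroup.closure (Set.range PresentedGroup.of) := by simp
  induction hg using Subgroup.closure_induction_left with
  | one => exact ⟨0, 0, 0, by simp⟩
  | mul_left x hx y _ ih =>
    obtain ⟨t, rfl⟩ := hx
    obtain ⟨k, j, i, rfl⟩ := ih
    obtain ⟨k', j', i', h⟩ := hmul t 1 k j i
    exact ⟨k', j', i', by rw [← h, zpow_one]⟩
  | inv_mul_cancel x hx y _ ih =>
    obtain ⟨t, rfl⟩ := hx
    obtain ⟨k, j, i, rfl⟩ := ih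
    obtain ⟨k', j', i', h⟩ := hmul t (-1) k j i
    exact ⟨k', j', i', by rw [← h, zpow_neg_one]⟩

theorem finite_and_card_le (hp : 0 < p) :
    Finite (GG p α β γ δ) ∧ Nat.card (GG p α β γ δ) ≤ p ^ (α + β + γ) := by
  obtain ⟨hfin, hcard⟩ := finite_and_card_le_of_forall_eq_zpow_mul_zpow_mul_zpow
    (pow_pos hp γ) (pow_pos hp β) (pow_pos hp α) gc_pow gb_pow ga_pow
    exists_eq_zpow_mul_zpow_mul_zpow
  refine ⟨hfin, hcard.trans_eq ?_⟩
  rw [pow_add, pow_add]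
  ring

theorem orderOf_gc (hα : γ ≤ α + δ) (hβ : γ ≤ β + δ) : orderOf 𝐜 = p ^ γ := by
  let f := zmodPairing (p ^ α) (p ^ β) ((p ^ δ : ℕ) : ZMod (p ^ γ))
    (ZMod.pow_nsmul_natCast_pow_eq_zero hα) (ZMod.pow_nsmul_natCast_pow_eq_zero hβ)
  let c := HeisenbergGroup.ofZ f (.ofAdd 1)
  have hc : orderOf c = p ^ γ := by
    rw [orderOf_injective _ HeisenbergGroup.ofZ_injective, orderOf_ofAdd_eq_addOrderOf,
      ZMod.addOrderOf_one]
  let Φ : GG p α β γ δ →* HeisenbergGroup f :=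
    lift (HeisenbergGroup.ofX f (.ofAdd 1)) (HeisenbergGroup.ofY f (.ofAdd 1)) c
      (HeisenbergGroup.commute_ofZ _ _) (HeisenbergGroup.commute_ofZ _ _)
      (by rw [← map_pow, ZMod.ofAdd_one_pow_self, map_one])
      (by rw [← map_pow, ZMod.ofAdd_one_pow_self, map_one])
      (by rw [← map_pow, ZMod.ofAdd_one_pow_self, map_one])
      (by rw [HeisenbergGroup.commutatorElement_ofX_ofY, ← map_pow, ← ofAdd_nsmul, nsmul_one]
          simp [f])
  have hΦc : Φ 𝐜 = c := lift_gc ..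
  refine Nat.dvd_antisymm (orderOf_dvd_of_pow_eq_one gc_pow) ?_
  rw [← hc, ← hΦc]
  exact orderOf_map_dvd Φ _

variable (p α β γ δ) in
def toZModProd :
    GG p α β γ δ →* Multiplicative (ZMod (p ^ α)) × Multiplicative (ZMod (p ^ β)) :=
  lift (.ofAdd 1, 1) (1, .ofAdd 1) 1 (.one_right _) (.one_right _)
    (by simp [ZMod.ofAdd_one_pow_self]) (by simp [ZMod.ofAdd_one_pow_self]) (one_pow _)
    (by simp [commutatorElement_eq_one_iff_commute, Commute.all])

theorem toZModProd_ga : toZModProd p α β γ δ 𝐚 = (.ofAdd 1, 1) := lift_ga ..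
theorem toZModProd_gb : toZModProd p α β γ δ 𝐛 = (1, .ofAdd 1) := lift_gb ..
theorem toZModProd_gc : toZModProd p α β γ δ 𝐜 = 1 := lift_gc ..

theorem toZModProd_surjective : Function.Surjective (toZModProd p α β γ δ) := by
  rintro ⟨u, v⟩
  obtain ⟨i, hi⟩ := ZMod.intCast_surjective u.toAdd
  obtain ⟨j, hj⟩ := ZMod.intCast_surjective v.toAdd
  refine ⟨𝐚 ^ i * 𝐛 ^ j, ?_⟩
  simp [toZModProd_ga, toZModProd_gb, ← ofAdd_zsmul, hi, hj]

theorem zpowers_gc_le_ker : Subgroup.zpowers 𝐜 ≤ (toZModProd p α β γ δ).ker :=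
  Subgroup.zpowers_le.mpr toZModProd_gc

end GG

theorem GG_structure_general
    (p : ℕ) (hp : p.Prime) (α β γ δ : ℕ)
    (h2 : γ - δ ≤ min α β) :
    gc p α β γ δ ∈ Subgroup.center (GG p α β γ δ) ∧
    orderOf (gc p α β γ δ) = p ^ γ ∧
    (∃ φ : GG p α β γ δ →*
        Multiplicative (ZMod (p ^ α)) × Multiplicative (ZMod (p ^ β)),
      Function.Surjective φ ∧
      φ.ker = Subgroup.zpowers (gc p α β γ δ) ∧
      φ (ga p α β γ δ) = (Multiplicative.ofAdd 1, 1) ∧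
      φ (gb p α β γ δ) = (1, Multiplicative.ofAdd 1)) ∧
    Nat.card (GG p α β γ δ) = p ^ (α + β + γ) := by
  have hord : orderOf (gc p α β γ δ) = p ^ γ := GG.orderOf_gc (by omega) (by omega)
  obtain ⟨_, hcard_le⟩ := GG.finite_and_card_le (α := α) (β := β) (γ := γ) (δ := δ) hp.pos
  have hcardQ : Nat.card (Multiplicative (ZMod (p ^ α)) × Multiplicative (ZMod (p ^ β))) =
      p ^ α * p ^ β := by
    rw [Nat.card_prod, Nat.card_congr Multiplicative.toAdd, Nat.card_congr Multiplicative.toAdd,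
      Nat.card_zmod, Nat.card_zmod]
  have hker : (GG.toZModProd p α β γ δ).ker = Subgroup.zpowers (gc p α β γ δ) :=
    MonoidHom.ker_eq_of_le_of_card_le GG.toZModProd_surjective GG.zpowers_gc_le_ker <| by
      rwa [hcardQ, Nat.card_zpowers, hord, ← pow_add, ← pow_add]
  refine ⟨GG.gc_mem_center, hord,
    ⟨_, GG.toZModProd_surjective, hker, GG.toZModProd_ga, GG.toZModProd_gb⟩, ?_⟩
  rw [MonoidHom.card_eq_card_mul_card_ker GG.toZModProd_surjective, hker, hcardQ,
    Nat.card_zpowers, hord, ← pow_add, ← pow_add]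

/-- For `G = G(α,β,γ,δ)`: the element `c` is central of order exactly `p ^ γ`, the quotient
`G/⟨c⟩` is isomorphic to `ℤ/p^α × ℤ/p^β` generated by the images of `a` and `b` (expressed via
a surjection `G → ℤ/p^α × ℤ/p^β` with kernel `⟨c⟩` sending `a`, `b` to the standard generators),
and `G` has order `p ^ (α + β + γ)`. -/
theorem GG_structure
    (p : ℕ) (hp : p.Prime) (α β γ δ : ℕ)
    (hα : 0 < α) (hβ : 0 < β) (hγ : 0 < γ) (hδ : 0 < δ)
    (h1 : δ ≤ γ) (h2 : γ - δ ≤ min α β) :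
    gc p α β γ δ ∈ Subgroup.center (GG p α β γ δ) ∧
    orderOf (gc p α β γ δ) = p ^ γ ∧
    (∃ φ : GG p α β γ δ →*
        Multiplicative (ZMod (p ^ α)) × Multiplicative (ZMod (p ^ β)),
      Function.Surjective φ ∧
      φ.ker = Subgroup.zpowers (gc p α β γ δ) ∧
      φ (ga p α β γ δ) = (Multiplicative.ofAdd 1, 1) ∧
      φ (gb p α β γ δ) = (1, Multiplicative.ofAdd 1)) ∧
    Nat.card (GG p α β γ δ) = p ^ (α + β + γ) :=
  GG_structure_general p hp α β γ δ h2
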